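/- arXiv:2310.07045 — 4 statements merged into one kernel-verified Lean document; each statement's English description precedes it below -/
import Mathlib

section
/- Let (G_n) be an FO-convergent sequence of finite graphs (not necessarily possessing a modeling limit) and let ξ(x) be a first-order formula in one free variable such that ξ(G_n) ≠ ∅ for every n and sup_n |ξ(G_n)| < ∞. Then there exists a sequence of roots (r_n) with r_n ∈ ξ(G_n) such that the rooted sequence (G_n, r_n) is FO-convergent, i.e., ⟨φ,(G_n,r_n)⟩ converges for every formula φ(x_1,…,x_p,y). -/
open FirstOrder Language MeasureTheory Filter

/-- The set of solutions of a formula `φ` in `p` free variables in a graph. -/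
def solSet {V : Type} (G : SimpleGraph V) {p : ℕ}
    (φ : Language.graph.Formula (Fin p)) : Set (Fin p → V) :=
  letI := G.structure
  {v | φ.Realize v}

/-- The set of solutions of a rooted formula `φ(x₁,…,x_p,y)` with the root variable `y`
interpreted as `r`. -/
def solSetR {V : Type} (G : SimpleGraph V) {p : ℕ}
    (φ : Language.graph.Formula (Fin (p + 1))) (r : V) : Set (Fin p → V) :=
  letI := G.structure
  {v | φ.Realize (Fin.snoc v r)}

/-- The set of solutions of a one-variable formula. -/
def sol1 {V : Type} (G : SimpleGraph V) (ξ : Language.graph.Formula (Fin 1)) : Set V :=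
  letI := G.structure
  {v : V | ξ.Realize (fun _ => v)}

/-- Stone pairing `⟨φ,G⟩` of a formula and a finite graph. -/
noncomputable def stoneG {V : Type} (fV : Fintype V) (G : SimpleGraph V) {p : ℕ}
    (φ : Language.graph.Formula (Fin p)) : ℝ :=
  (Nat.card (solSet G φ) : ℝ) / (Fintype.card V : ℝ) ^ p

/-- Rooted Stone pairing `⟨φ,(G,r)⟩` of a rooted formula and a finite graph with root `r`. -/
noncomputable def stoneGR {V : Type} (fV : Fintype V) (G : SimpleGraph V) {p : ℕ}
    (φ : Language.graph.Formula (Fin (p + 1))) (r : V) : ℝ :=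
  (Nat.card (solSetR G φ r) : ℝ) / (Fintype.card V : ℝ) ^ p

/-- Stone pairing `⟨φ,L⟩` of a formula and a modeling. -/
noncomputable def stoneL {W : Type} [MeasurableSpace W] (L : SimpleGraph W)
    (ν : Measure W) {p : ℕ} (φ : Language.graph.Formula (Fin p)) : ℝ :=
  ((Measure.pi fun _ : Fin p => ν) (solSet L φ)).toReal

/-- Rooted Stone pairing `⟨φ,(L,r)⟩` of a rooted formula and a modeling with root `r`. -/
noncomputable def stoneLR {W : Type} [MeasurableSpace W] (L : SimpleGraph W)
    (ν : Measure W) {p : ℕ} (φ : Language.graph.Formula (Fin (p + 1))) (r : W) : ℝ :=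
  ((Measure.pi fun _ : Fin p => ν) (solSetR L φ r)).toReal

/-!
Send a root `r` of `G n` to its profile `(⟨φ, (G n, r)⟩)_φ` in the compact metrizable cube
`[0, 1] ^ Φ` indexed by all rooted formulas. For a rooted formula `Ψ`, the sum of
`⟨Ψ, (G n, r)⟩` over the roots `r ∈ ξ(G n)` equals `∑_{k=1}^{B} ⟨∃^{≥k} y (ξ(y) ∧ Ψ(x̄, y)), G n⟩`,
which converges by FO-convergence. A conjunction of rooted formulas on disjoint variables
multiplies rooted Stone pairings, so these sums converge for every polynomial in the coordinates
and, as there are at most `B` roots, by Stone–Weierstrass for every continuous function. Hence the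
counting measures of the profiles converge weakly to a nonzero measure, and roots whose profiles
approach a point of its support are the required ones.
-/

open Finset Topology

section RootedFormulas

variable {V : Type}

theorem stoneGR_mem_Icc (fV : Fintype V) (G : SimpleGraph V) {p : ℕ}
    (φ : Language.graph.Formula (Fin (p + 1))) (r : V) : stoneGR fV G φ r ∈ Set.Icc (0 : ℝ) 1 := by
  have hV : 0 < Fintype.card V := Fintype.card_pos_iff.2 ⟨r⟩
  have hcard : Nat.card (solSetR G φ r) ≤ Fintype.card V ^ p := by
    simpa [Nat.card_fun] using Finite.card_subtype_le (· ∈ solSetR G φ r)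
  refine ⟨by unfold stoneGR; positivity, (div_le_one (by positivity)).2 ?_⟩
  exact_mod_cast hcard

theorem stoneGR_top (fV : Fintype V) (G : SimpleGraph V) (r : V) :
    stoneGR fV G (⊤ : Language.graph.Formula (Fin (0 + 1))) r = 1 := by
  simp [stoneGR, solSetR, Formula.realize_top]

/-- `φ(x̄, y) ∧ ψ(z̄, y)` with the tuples `x̄` and `z̄` kept disjoint. -/
def rootedAnd {p q : ℕ} (φ : Language.graph.Formula (Fin (p + 1)))
    (ψ : Language.graph.Formula (Fin (q + 1))) : Language.graph.Formula (Fin (p + q + 1)) :=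
  φ.relabel (Fin.snoc (Fin.castSucc ∘ Fin.castAdd q) (Fin.last _)) ⊓
    ψ.relabel (Fin.snoc (Fin.castSucc ∘ Fin.natAdd p) (Fin.last _))

theorem append_mem_solSetR_rootedAnd (G : SimpleGraph V) {p q : ℕ}
    (φ : Language.graph.Formula (Fin (p + 1))) (ψ : Language.graph.Formula (Fin (q + 1)))
    (r : V) (a : Fin p → V) (b : Fin q → V) :
    Fin.append a b ∈ solSetR G (rootedAnd φ ψ) r ↔ a ∈ solSetR G φ r ∧ b ∈ solSetR G ψ r := by
  let := G.structure
  have hφ : (Fin.snoc (Fin.append a b) r : Fin (p + q + 1) → V) ∘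
      Fin.snoc (Fin.castSucc ∘ Fin.castAdd q) (Fin.last _) = Fin.snoc a r := by
    funext i
    refine Fin.lastCases ?_ (fun i => ?_) i <;> simp
  have hψ : (Fin.snoc (Fin.append a b) r : Fin (p + q + 1) → V) ∘
      Fin.snoc (Fin.castSucc ∘ Fin.natAdd p) (Fin.last _) = Fin.snoc b r := by
    funext i
    refine Fin.lastCases ?_ (fun i => ?_) i <;> simp [-Fin.castSucc_natAdd]
  simp only [solSetR, Set.mem_ofPred_eq, rootedAnd, Formula.realize_inf, Formula.realize_relabel,
    hφ, hψ]

theorem stoneGR_rootedAnd (fV : Fintype V) (G : SimpleGraph V) {p q : ℕ}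
    (φ : Language.graph.Formula (Fin (p + 1))) (ψ : Language.graph.Formula (Fin (q + 1)))
    (r : V) : stoneGR fV G (rootedAnd φ ψ) r = stoneGR fV G φ r * stoneGR fV G ψ r := by
  have hcard : Nat.card (solSetR G (rootedAnd φ ψ) r)
      = Nat.card (solSetR G φ r) * Nat.card (solSetR G ψ r) := by
    rw [← Nat.card_prod, ← Nat.card_congr (Equiv.Set.prod _ _)]
    exact Nat.card_congr ((Fin.appendEquiv p q).subtypeEquiv fun ab =>
      (append_mem_solSetR_rootedAnd G φ ψ r ab.1 ab.2).symm).symm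
  simp only [stoneGR, hcard, Nat.cast_mul, pow_add]
  ring

end RootedFormulas

section Counting

theorem Finset.exists_injective_forall_mem_iff_le_card {α : Type*} {s : Finset α} {k : ℕ} :
    (∃ xs : Fin k → α, Function.Injective xs ∧ ∀ i, xs i ∈ s) ↔ k ≤ #s := by
  constructor
  · rintro ⟨xs, hinj, hmem⟩
    simpa using Finset.card_le_card_of_injOn (s := univ) xs (fun i _ => hmem i) hinj.injOn
  · intro hk
    obtain ⟨e⟩ : Nonempty (Fin k ↪ s) := Function.Embedding.nonempty_of_card_le (by simpa)
    exact ⟨Subtype.val ∘ e, Subtype.val_injective.comp e.injective, fun i => (e i).2⟩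

/-- "There are at least `k` distinct roots `y` with `ξ(y) ∧ Ψ(x̄, y)`." -/
noncomputable def atLeastRoots {P : ℕ} (ξ : Language.graph.Formula (Fin 1))
    (Ψ : Language.graph.Formula (Fin (P + 1))) (k : ℕ) : Language.graph.Formula (Fin P) :=
  BoundedFormula.exs <|
    (BoundedFormula.iInf fun ij : Fin k × Fin k =>
      if ij.1 = ij.2 then ⊤ else ∼((Term.var (Sum.inr ij.1)).bdEqual (Term.var (Sum.inr ij.2)))) ⊓
    BoundedFormula.iInf fun i : Fin k =>
      BoundedFormula.relabel (fun _ => Sum.inr i) ξ ⊓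
        BoundedFormula.relabel (Fin.snoc Sum.inl (Sum.inr i)) Ψ

variable {V : Type} (G : SimpleGraph V)

theorem mem_solSet_atLeastRoots_iff {P : ℕ} (ξ : Language.graph.Formula (Fin 1))
    (Ψ : Language.graph.Formula (Fin (P + 1))) (k : ℕ) (v : Fin P → V) :
    v ∈ solSet G (atLeastRoots ξ Ψ k) ↔ ∃ xs : Fin k → V, Function.Injective xs ∧
      ∀ i, xs i ∈ sol1 G ξ ∧ v ∈ solSetR G Ψ (xs i) := by
  let := G.structure
  change (atLeastRoots ξ Ψ k).Realize v ↔ ∃ xs : Fin k → V, Function.Injective xs ∧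
      ∀ i, ξ.Realize (fun _ => xs i) ∧ Ψ.Realize (Fin.snoc v (xs i))
  rw [atLeastRoots, BoundedFormula.realize_exs]
  refine exists_congr fun xs => ?_
  simp only [BoundedFormula.realize_inf, BoundedFormula.realize_iInf,
    BoundedFormula.realize_relabel]
  refine and_congr ?_ (forall_congr' fun i => ?_)
  · simp only [Prod.forall, Function.Injective]
    refine forall₂_congr fun i j => ?_
    split_ifs with h <;> simp [h]
  · have hsnoc :
        Sum.elim v (xs ∘ Fin.castAdd 0) ∘ Fin.snoc Sum.inl (Sum.inr i) = Fin.snoc v (xs i) := by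
      funext j
      refine Fin.lastCases ?_ (fun j => ?_) j <;> simp
    rw [hsnoc, Subsingleton.elim (xs ∘ Fin.natAdd k : Fin 0 → V) default]
    rfl

theorem sum_card_solSetR_eq_sum_card_atLeastRoots [Fintype V] (ξ : Language.graph.Formula (Fin 1))
    {P : ℕ} (Ψ : Language.graph.Formula (Fin (P + 1))) {B : ℕ} (hB : Nat.card (sol1 G ξ) ≤ B) :
    ∑ r ∈ (Set.toFinite (sol1 G ξ)).toFinset, Nat.card (solSetR G Ψ r)
      = ∑ k ∈ Icc 1 B, Nat.card (solSet G (atLeastRoots ξ Ψ k)) := by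
  classical
  set A := (Set.toFinite (sol1 G ξ)).toFinset
  have hcard {α : Type} [Fintype α] (s : Set α) : Nat.card s = #{x | x ∈ s} := by
    rw [Nat.card_eq_fintype_card, Fintype.card_subtype]
  -- for a fixed tuple `v`, both sides count the roots `r ∈ A` with `Ψ(v, r)`
  have hlayer (v : Fin P → V) : #{k ∈ Icc 1 B | v ∈ solSet G (atLeastRoots ξ Ψ k)}
      = #{r ∈ A | v ∈ solSetR G Ψ r} := by
    have hmem (k : ℕ) : v ∈ solSet G (atLeastRoots ξ Ψ k) ↔ k ≤ #{r ∈ A | v ∈ solSetR G Ψ r} := by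
      rw [mem_solSet_atLeastRoots_iff, ← Finset.exists_injective_forall_mem_iff_le_card]
      simp [A]
    have hle : #{r ∈ A | v ∈ solSetR G Ψ r} ≤ B :=
      (card_filter_le _ _).trans (by rwa [← Nat.card_eq_card_finite_toFinset])
    have : {k ∈ Icc 1 B | v ∈ solSet G (atLeastRoots ξ Ψ k)}
        = Icc 1 #{r ∈ A | v ∈ solSetR G Ψ r} := by
      ext k
      simp only [mem_filter, mem_Icc, hmem]
      omega
    rw [this, Nat.card_Icc, Nat.add_sub_cancel]
  calc ∑ r ∈ A, Nat.card (solSetR G Ψ r)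
      = ∑ r ∈ A, #(univ.bipartiteAbove (fun r v => v ∈ solSetR G Ψ r) r) := by
        simp only [hcard, bipartiteAbove]
    _ = ∑ v, #((Icc 1 B).bipartiteBelow (fun k v => v ∈ solSet G (atLeastRoots ξ Ψ k)) v) := by
        rw [sum_card_bipartiteAbove_eq_sum_card_bipartiteBelow]
        simp only [bipartiteBelow, hlayer]
    _ = ∑ k ∈ Icc 1 B, #(univ.bipartiteAbove (fun k v => v ∈ solSet G (atLeastRoots ξ Ψ k)) k) :=
        (sum_card_bipartiteAbove_eq_sum_card_bipartiteBelow _).symm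
    _ = ∑ k ∈ Icc 1 B, Nat.card (solSet G (atLeastRoots ξ Ψ k)) := by
        simp only [hcard, bipartiteAbove]

theorem sum_stoneGR_eq_sum_stoneG_atLeastRoots (fV : Fintype V) (ξ : Language.graph.Formula (Fin 1))
    {P : ℕ} (Ψ : Language.graph.Formula (Fin (P + 1))) {B : ℕ} (hB : Nat.card (sol1 G ξ) ≤ B) :
    ∑ r ∈ (Set.toFinite (sol1 G ξ)).toFinset, stoneGR fV G Ψ r
      = ∑ k ∈ Icc 1 B, stoneG fV G (atLeastRoots ξ Ψ k) := by
  simp only [stoneGR, stoneG, ← sum_div, ← Nat.cast_sum,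
    sum_card_solSetR_eq_sum_card_atLeastRoots G ξ Ψ hB]

end Counting

section ConvergentSums

variable {K : Type*} [TopologicalSpace K] {ι : ℕ → Type*}

/-- The test functions against which the counting measures `∑_{r ∈ S n} δ_{T n r}` converge. -/
def convergentSums (S : ∀ n, Finset (ι n)) (T : ∀ n, ι n → K) : Submodule ℝ C(K, ℝ) where
  carrier := {g | ∃ c, Tendsto (fun n => ∑ r ∈ S n, g (T n r)) atTop (𝓝 c)}
  add_mem' := by
    rintro f g ⟨c, hc⟩ ⟨d, hd⟩
    exact ⟨c + d, by simpa [sum_add_distrib] using hc.add hd⟩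
  zero_mem' := ⟨0, by simp⟩
  smul_mem' := by
    rintro a g ⟨c, hc⟩
    exact ⟨a * c, by simpa [mul_sum] using hc.const_mul a⟩

variable {S : ∀ n, Finset (ι n)} {T : ∀ n, ι n → K}

theorem isClosed_convergentSums [CompactSpace K] {B : ℕ} (hB : ∀ n, #(S n) ≤ B) :
    IsClosed (convergentSums S T : Set C(K, ℝ)) := by
  refine isClosed_of_closure_subset fun f hf => cauchySeq_tendsto_of_complete ?_
  refine Metric.cauchySeq_iff'.2 fun ε hε => ?_
  obtain ⟨g, ⟨c, hc⟩, hfg⟩ := Metric.mem_closure_iff.1 hf (ε / (3 * (B + 1))) (by positivity)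
  obtain ⟨N, hN⟩ := Metric.cauchySeq_iff'.1 hc.cauchySeq (ε / 3) (by positivity)
  have hclose (n : ℕ) : dist (∑ r ∈ S n, f (T n r)) (∑ r ∈ S n, g (T n r)) < ε / 3 := by
    calc dist (∑ r ∈ S n, f (T n r)) (∑ r ∈ S n, g (T n r))
        ≤ ∑ _r ∈ S n, dist f g := dist_sum_sum_le_of_le _ fun r _ => f.dist_apply_le_dist _
      _ ≤ (B + 1) * dist f g := by
        rw [sum_const, nsmul_eq_mul]
        gcongr
        exact_mod_cast (hB n).trans (Nat.le_succ B)
      _ < (B + 1) * (ε / (3 * (B + 1))) := by gcongr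
      _ = ε / 3 := by field_simp
  refine ⟨N, fun n hn => ?_⟩
  have := dist_triangle4 (∑ r ∈ S n, f (T n r)) (∑ r ∈ S n, g (T n r))
    (∑ r ∈ S N, g (T N r)) (∑ r ∈ S N, f (T N r))
  linarith [hclose n, hN n hn, hclose N, dist_comm (∑ r ∈ S N, g (T N r)) (∑ r ∈ S N, f (T N r))]

theorem convergentSums_eq_top_of_dense [CompactSpace K] {B : ℕ} (hB : ∀ n, #(S n) ≤ B)
    {D : Set C(K, ℝ)} (hD : Dense D) (hDS : D ⊆ convergentSums S T) : convergentSums S T = ⊤ :=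
  SetLike.coe_injective <| Set.eq_univ_of_univ_subset <|
    hD.closure_eq ▸ (isClosed_convergentSums hB).closure_subset_iff.2 hDS

end ConvergentSums

section PointSelection

open Metric

variable {K : Type*} {ι : ℕ → Type*} {S : ∀ n, Finset (ι n)} {T : ∀ n, ι n → K}

/-- Otherwise finitely many bumps around points avoided infinitely often would have sums bounded
below by `1 / 2`, while each of these sums tends to `0`. -/
theorem exists_forall_eventually_exists_dist_lt [PseudoMetricSpace K] [CompactSpace K]
    (hS : ∀ n, (S n).Nonempty) (htop : convergentSums S T = ⊤) :
    ∃ t, ∀ ε > 0, ∀ᶠ n in atTop, ∃ r ∈ S n, dist (T n r) t < ε := by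
  by_contra! hfar
  choose ε hε hfreq using hfar
  let bump (t : K) : C(K, ℝ) := ⟨fun x => max 0 (1 - dist x t / ε t), by fun_prop⟩
  have bump_nonneg (t x : K) : 0 ≤ bump t x := le_max_left _ _
  have hlim (t : K) : Tendsto (fun n => ∑ r ∈ S n, bump t (T n r)) atTop (𝓝 0) := by
    obtain ⟨c, hc⟩ : bump t ∈ convergentSums S T := htop ▸ Submodule.mem_top
    have hzero : ∃ᶠ n in atTop, ∑ r ∈ S n, bump t (T n r) = 0 :=
      (hfreq t).mono fun n hn => sum_eq_zero fun r hr =>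
        max_eq_left (by rw [sub_nonpos, le_div_iff₀ (hε t), one_mul]; exact hn r hr)
    rwa [tendsto_nhds_unique_of_frequently_eq hc tendsto_const_nhds hzero] at hc
  obtain ⟨F, hF⟩ := isCompact_univ.elim_finite_subcover (fun t => ball t (ε t / 2))
    (fun _ => isOpen_ball) fun x _ => Set.mem_iUnion.2 ⟨x, mem_ball_self (by linarith [hε x])⟩
  have hlow (n : ℕ) : 1 / 2 ≤ ∑ t ∈ F, ∑ r ∈ S n, bump t (T n r) := by
    obtain ⟨r, hr⟩ := hS n
    obtain ⟨t, htF, ht⟩ := Set.mem_iUnion₂.1 (hF (Set.mem_univ (T n r)))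
    have hhalf : 1 / 2 ≤ bump t (T n r) := by
      refine le_max_of_le_right ?_
      rw [mem_ball, lt_div_iff₀ two_pos] at ht
      rw [le_sub_comm, div_le_iff₀ (hε t)]
      linarith
    calc (1 : ℝ) / 2 ≤ bump t (T n r) := hhalf
      _ ≤ ∑ r ∈ S n, bump t (T n r) := single_le_sum (fun r _ => bump_nonneg t _) hr
      _ ≤ ∑ t ∈ F, ∑ r ∈ S n, bump t (T n r) :=
        single_le_sum (f := fun t => ∑ r ∈ S n, bump t (T n r))
          (fun t _ => sum_nonneg fun r _ => bump_nonneg t _) htF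
  have := ge_of_tendsto (tendsto_finsetSum F fun t _ => hlim t) (.of_forall hlow)
  norm_num at this

theorem exists_tendsto_of_forall_eventually_exists_dist_lt [PseudoMetricSpace K]
    (hS : ∀ n, (S n).Nonempty) {t : K}
    (ht : ∀ ε > 0, ∀ᶠ n in atTop, ∃ r ∈ S n, dist (T n r) t < ε) :
    ∃ rs : ∀ n, ι n, (∀ n, rs n ∈ S n) ∧ Tendsto (fun n => T n (rs n)) atTop (𝓝 t) := by
  choose rs hrs hmin using fun n => (S n).exists_min_image (fun r => dist (T n r) t) (hS n)
  exact ⟨rs, hrs, Metric.tendsto_nhds.2 fun ε hε =>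
    (ht ε hε).mono fun n ⟨r, hr, hdist⟩ => (hmin n r hr).trans_lt hdist⟩

theorem exists_tendsto_of_convergentSums_eq_top [TopologicalSpace K] [CompactSpace K]
    [TopologicalSpace.MetrizableSpace K] (hS : ∀ n, (S n).Nonempty)
    (htop : convergentSums S T = ⊤) :
    ∃ t, ∃ rs : ∀ n, ι n, (∀ n, rs n ∈ S n) ∧ Tendsto (fun n => T n (rs n)) atTop (𝓝 t) := by
  let := TopologicalSpace.metrizableSpaceMetric K
  obtain ⟨t, ht⟩ := exists_forall_eventually_exists_dist_lt hS htop
  exact ⟨t, exists_tendsto_of_forall_eventually_exists_dist_lt hS ht⟩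

end PointSelection

section Profiles

instance {α : Type} [Countable α] : Countable (Language.graph.Formula α) :=
  (sigma_mk_injective (i := 0) : Function.Injective fun φ : Language.graph.Formula α =>
    (⟨0, φ⟩ : Σ n, Language.graph.BoundedFormula α n)).countable

abbrev RootedFormula : Type := Σ p : ℕ, Language.graph.Formula (Fin (p + 1))

abbrev ProfileCube : Type := RootedFormula → Set.Icc (0 : ℝ) 1

noncomputable def rootedProfile {V : Type} (fV : Fintype V) (G : SimpleGraph V) (r : V) :
    ProfileCube :=
  fun φ => ⟨stoneGR fV G φ.2 r, stoneGR_mem_Icc fV G φ.2 r⟩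

def profileCoord (φ : RootedFormula) : C(ProfileCube, ℝ) :=
  ⟨fun t => t φ, by fun_prop⟩

theorem dense_adjoin_range_profileCoord :
    Dense (Algebra.adjoin ℝ (Set.range profileCoord) : Set C(ProfileCube, ℝ)) := by
  rw [dense_iff_closure_eq, ← Subalgebra.topologicalClosure_coe,
    ContinuousMap.subalgebra_topologicalClosure_eq_top_of_separatesPoints, Algebra.coe_top]
  intro x y hxy
  obtain ⟨φ, hφ⟩ := Function.ne_iff.1 hxy
  exact ⟨profileCoord φ, ⟨_, Algebra.subset_adjoin ⟨φ, rfl⟩, rfl⟩, fun h => hφ (Subtype.ext h)⟩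

theorem exists_stoneGR_eq_of_mem_closure {u : C(ProfileCube, ℝ)}
    (hu : u ∈ Submonoid.closure (Set.range profileCoord)) :
    ∃ (P : ℕ) (Ψ : Language.graph.Formula (Fin (P + 1))), ∀ {V : Type} (fV : Fintype V)
      (G : SimpleGraph V) (r : V), u (rootedProfile fV G r) = stoneGR fV G Ψ r := by
  induction hu using Submonoid.closure_induction with
  | mem x hx =>
    obtain ⟨φ, rfl⟩ := hx
    exact ⟨φ.1, φ.2, fun _ _ _ => rfl⟩
  | one => exact ⟨0, ⊤, fun fV G r => (stoneGR_top fV G r).symm⟩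
  | mul x y _ _ ihx ihy =>
    obtain ⟨P, Ψ, hx⟩ := ihx
    obtain ⟨Q, Φ, hy⟩ := ihy
    exact ⟨P + Q, rootedAnd Ψ Φ, fun fV G r => by
      rw [ContinuousMap.mul_apply, hx, hy, stoneGR_rootedAnd]⟩

end Profiles

section Sequences

variable {V : ℕ → Type} (fV : ∀ n, Fintype (V n)) (G : ∀ n, SimpleGraph (V n))

theorem adjoin_le_convergentSums {S : ∀ n, Finset (V n)}
    (hsum : ∀ (P : ℕ) (Ψ : Language.graph.Formula (Fin (P + 1))),
      ∃ c, Tendsto (fun n => ∑ r ∈ S n, stoneGR (fV n) (G n) Ψ r) atTop (𝓝 c)) :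
    Subalgebra.toSubmodule (Algebra.adjoin ℝ (Set.range profileCoord))
      ≤ convergentSums S fun n => rootedProfile (fV n) (G n) := by
  rw [Algebra.adjoin_eq_span, Submodule.span_le]
  intro u hu
  obtain ⟨P, Ψ, hΨ⟩ := exists_stoneGR_eq_of_mem_closure hu
  change ∃ c, Tendsto (fun n => ∑ r ∈ S n, u (rootedProfile (fV n) (G n) r)) atTop (𝓝 c)
  simpa only [hΨ] using hsum P Ψ

theorem exists_tendsto_sum_stoneGR
    (hFOconv : ∀ (p : ℕ) (φ : Language.graph.Formula (Fin p)),
      ∃ c : ℝ, Tendsto (fun n => stoneG (fV n) (G n) φ) atTop (𝓝 c))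
    (ξ : Language.graph.Formula (Fin 1)) {B : ℕ} (hB : ∀ n, Nat.card (sol1 (G n) ξ) ≤ B)
    (P : ℕ) (Ψ : Language.graph.Formula (Fin (P + 1))) :
    ∃ c, Tendsto (fun n => ∑ r ∈ (Set.toFinite (sol1 (G n) ξ)).toFinset, stoneGR (fV n) (G n) Ψ r)
      atTop (𝓝 c) := by
  choose c hc using fun k => hFOconv P (atLeastRoots ξ Ψ k)
  refine ⟨∑ k ∈ Icc 1 B, c k, ?_⟩
  simp only [sum_stoneGR_eq_sum_stoneG_atLeastRoots _ _ ξ Ψ (hB _)]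
  exact tendsto_finsetSum _ fun k _ => hc k

end Sequences

theorem rooting_without_modeling_limit_general
    (V : ℕ → Type) (fV : ∀ n, Fintype (V n))
    (G : ∀ n, SimpleGraph (V n))
    (hFOconv : ∀ (p : ℕ) (φ : Language.graph.Formula (Fin p)),
      ∃ c : ℝ, Tendsto (fun n => stoneG (fV n) (G n) φ) atTop (nhds c))
    (ξ : Language.graph.Formula (Fin 1))
    (hne : ∀ n, (sol1 (G n) ξ).Nonempty)
    (hbdd : ∃ B : ℕ, ∀ n, Nat.card (sol1 (G n) ξ) ≤ B) :
    ∃ rs : (n : ℕ) → V n, (∀ n, rs n ∈ sol1 (G n) ξ) ∧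
      ∀ (p : ℕ) (φ : Language.graph.Formula (Fin (p + 1))),
        ∃ c : ℝ, Tendsto (fun n => stoneGR (fV n) (G n) φ (rs n)) atTop (nhds c) := by
  obtain ⟨B, hB⟩ := hbdd
  set S := fun n => (Set.toFinite (sol1 (G n) ξ)).toFinset
  have hS (n : ℕ) : (S n).Nonempty := (Set.Finite.toFinset_nonempty _).2 (hne n)
  have hcard (n : ℕ) : #(S n) ≤ B := Nat.card_eq_card_finite_toFinset _ ▸ hB n
  have htop : convergentSums S (fun n => rootedProfile (fV n) (G n)) = ⊤ :=
    convergentSums_eq_top_of_dense hcard dense_adjoin_range_profileCoord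
      (adjoin_le_convergentSums fV G (exists_tendsto_sum_stoneGR fV G hFOconv ξ hB))
  obtain ⟨t, rs, hrs, hlim⟩ := exists_tendsto_of_convergentSums_eq_top hS htop
  exact ⟨rs, fun n => (Set.Finite.mem_toFinset _).1 (hrs n), fun p φ =>
    ⟨t ⟨p, φ⟩, ((profileCoord ⟨p, φ⟩).continuous.tendsto t).comp hlim⟩⟩

/-- If `(Gₙ)` is FO-convergent (no modeling limit required) and `ξ(x)` has
nonempty solution sets of uniformly bounded size in the `Gₙ`, then there are roots
`rₙ ∈ ξ(Gₙ)` making the rooted sequence FO-convergent. -/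
theorem rooting_without_modeling_limit
    (V : ℕ → Type) (fV : ∀ n, Fintype (V n)) (hVne : ∀ n, Nonempty (V n))
    (G : ∀ n, SimpleGraph (V n))
    (hFOconv : ∀ (p : ℕ) (φ : Language.graph.Formula (Fin p)),
      ∃ c : ℝ, Tendsto (fun n => stoneG (fV n) (G n) φ) atTop (nhds c))
    (ξ : Language.graph.Formula (Fin 1))
    (hne : ∀ n, (sol1 (G n) ξ).Nonempty)
    (hbdd : ∃ B : ℕ, ∀ n, Nat.card (sol1 (G n) ξ) ≤ B) :
    ∃ rs : (n : ℕ) → V n, (∀ n, rs n ∈ sol1 (G n) ξ) ∧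
      ∀ (p : ℕ) (φ : Language.graph.Formula (Fin (p + 1))),
        ∃ c : ℝ, Tendsto (fun n => stoneGR (fV n) (G n) φ (rs n)) atTop (nhds c) :=
  rooting_without_modeling_limit_general V fV G hFOconv ξ hne hbdd
end

section
/- Let (A,B,E) and (A',B',E') be two bipartite graphs with A, B, A', B' countable, and suppose each of them has the bipartite k-extension property for every k ∈ ℕ. Then they are isomorphic as bipartite graphs: there exist bijections f : A → A' and g : B → B' such that for all a ∈ A and b ∈ B, (a,b) ∈ E if and only if (f(a),g(b)) ∈ E'. -/
/-!
Back and forth. Call a pair of finite partial bijections `A ⇀ A'`, `B ⇀ B'` that respects the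
edge relations a partial isomorphism. The extension property realizes any prescribed adjacency
pattern towards finitely many vertices by a vertex outside any finite set, so a partial
isomorphism can be extended to contain any given vertex of any of the four sides: these four
kinds of extension are cofinal families. The Rasiowa–Sikorski lemma (`Order.idealOfCofinals`)
yields a directed family of partial isomorphisms meeting all of them, and its union is the
required pair of bijections.
-/

def BipExtension {A B : Type} (E : A → B → Prop) (k : ℕ) : Prop :=
  (∀ (X Y : Finset A) (Z : Finset B), Disjoint X Y →
      X.card + Y.card + Z.card ≤ k - 1 →
      ∃ v : B, v ∉ Z ∧ (∀ x ∈ X, E x v) ∧ (∀ y ∈ Y, ¬ E y v)) ∧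
  (∀ (X Y : Finset B) (Z : Finset A), Disjoint X Y →
      X.card + Y.card + Z.card ≤ k - 1 →
      ∃ v : A, v ∉ Z ∧ (∀ x ∈ X, E v x) ∧ (∀ y ∈ Y, ¬ E v y))

open Finset Relator

theorem Relator.BiTotal.exists_equiv {α β : Type*} {R : α → β → Prop} (ht : BiTotal R)
    (hu : BiUnique R) : ∃ e : α ≃ β, ∀ a, R a (e a) := by
  choose f hf using ht.1
  refine ⟨Equiv.ofBijective f ⟨fun a c hac => hu.1 (hf a) (hac ▸ hf c), fun b => ?_⟩, hf⟩
  obtain ⟨a, ha⟩ := ht.2 b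
  exact ⟨a, hu.2 (hf a) ha⟩

namespace BipExtension

variable {A B : Type} {E : A → B → Prop} {k : ℕ}

theorem flip (h : BipExtension E k) : BipExtension (flip E) k :=
  ⟨h.2, h.1⟩

theorem exists_realize (h : BipExtension E k) (S : Finset B) (φ : B → Prop) (Z : Finset A)
    (hk : #S + #Z < k) : ∃ a ∉ Z, ∀ b ∈ S, E a b ↔ φ b := by
  classical
  have hcard : #(S.filter φ) + #(S.filter (¬ φ ·)) + #Z ≤ k - 1 := by
    rw [card_filter_add_card_filter_not]
    omega
  obtain ⟨a, haZ, hpos, hneg⟩ :=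
    h.2 (S.filter φ) (S.filter (¬ φ ·)) Z (disjoint_filter_filter_not S S φ) hcard
  refine ⟨a, haZ, fun b hb => ?_⟩
  by_cases hφ : φ b
  · exact iff_of_true (hpos b (mem_filter.2 ⟨hb, hφ⟩)) hφ
  · exact iff_of_false (hneg b (mem_filter.2 ⟨hb, hφ⟩)) hφ

end BipExtension

structure BipPartialIso {A B A' B' : Type} (E : A → B → Prop) (E' : A' → B' → Prop) where
  mapA : Finset (A × A')
  mapB : Finset (B × B')
  biUnique_mapA : BiUnique fun a a' => (a, a') ∈ mapA
  biUnique_mapB : BiUnique fun b b' => (b, b') ∈ mapB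
  rel_iff : ∀ ⦃a a' b b'⦄, (a, a') ∈ mapA → (b, b') ∈ mapB → (E a b ↔ E' a' b')

namespace BipPartialIso

open scoped Classical

variable {A B A' B' : Type} {E : A → B → Prop} {E' : A' → B' → Prop}

instance : Preorder (BipPartialIso E E') :=
  Preorder.lift fun p => (p.mapA, p.mapB)

instance : Inhabited (BipPartialIso E E') :=
  ⟨⟨∅, ∅, by simp [BiUnique, LeftUnique, RightUnique], by simp [BiUnique, LeftUnique, RightUnique],
    by simp⟩⟩

def flip (p : BipPartialIso E E') : BipPartialIso (flip E) (flip E') :=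
  ⟨p.mapB, p.mapA, p.biUnique_mapB, p.biUnique_mapA, fun _ _ _ _ hb ha => p.rel_iff ha hb⟩

theorem flip_le_flip_iff {p q : BipPartialIso E E'} : p.flip ≤ q.flip ↔ p ≤ q :=
  and_comm

noncomputable def insertA (p : BipPartialIso E E') (a : A) (a' : A') (ha : ∀ x, (a, x) ∉ p.mapA)
    (ha' : ∀ x, (x, a') ∉ p.mapA) (hrel : ∀ ⦃b b'⦄, (b, b') ∈ p.mapB → (E a b ↔ E' a' b')) :
    BipPartialIso E E' where
  mapA := insert (a, a') p.mapA
  mapB := p.mapB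
  biUnique_mapA := by
    have ⟨hl, hr⟩ := p.biUnique_mapA
    constructor <;> intro x y z hx hy <;> simp only [mem_insert, Prod.mk.injEq] at hx hy
    · grind [LeftUnique]
    · grind [RightUnique]
  biUnique_mapB := p.biUnique_mapB
  rel_iff := by
    intro x x' b b' hx hb
    rcases mem_insert.1 hx with hx | hx
    · obtain ⟨rfl, rfl⟩ := Prod.mk.inj hx
      exact hrel hb
    · exact p.rel_iff hx hb

theorem le_insertA (p : BipPartialIso E E') {a : A} {a' : A'} {ha ha' hrel} :
    p ≤ p.insertA a a' ha ha' hrel :=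
  ⟨subset_insert (a, a') p.mapA, subset_rfl⟩

theorem isCofinal_forthA (hE' : ∀ k, BipExtension E' k) (a : A) :
    IsCofinal {q : BipPartialIso E E' | ∃ a', (a, a') ∈ q.mapA} := by
  intro p
  by_cases ha : ∃ a', (a, a') ∈ p.mapA
  · exact ⟨p, ha, le_rfl⟩
  push Not at ha
  -- `a'` has to see exactly the `p.mapB`-image of the neighbourhood of `a`
  obtain ⟨a', ha'Z, ha'⟩ := (hE' _).exists_realize (p.mapB.image Prod.snd)
    (fun b' => ∃ b, (b, b') ∈ p.mapB ∧ E a b) (p.mapA.image Prod.snd) (Nat.lt_succ_self _)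
  refine ⟨p.insertA a a' ha (fun x hx => ha'Z (mem_image_of_mem Prod.snd hx)) fun b b' hb => ?_,
    ⟨a', mem_insert_self _ _⟩, le_insertA ..⟩
  rw [ha' b' (mem_image_of_mem Prod.snd hb)]
  exact ⟨fun hab => ⟨b, hb, hab⟩, fun ⟨c, hc, hac⟩ => p.biUnique_mapB.1 hc hb ▸ hac⟩

theorem isCofinal_backA (hE : ∀ k, BipExtension E k) (a' : A') :
    IsCofinal {q : BipPartialIso E E' | ∃ a, (a, a') ∈ q.mapA} := by
  intro p
  by_cases ha' : ∃ a, (a, a') ∈ p.mapA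
  · exact ⟨p, ha', le_rfl⟩
  push Not at ha'
  obtain ⟨a, haZ, ha⟩ := (hE _).exists_realize (p.mapB.image Prod.fst)
    (fun b => ∃ b', (b, b') ∈ p.mapB ∧ E' a' b') (p.mapA.image Prod.fst) (Nat.lt_succ_self _)
  refine ⟨p.insertA a a' (fun x hx => haZ (mem_image_of_mem Prod.fst hx)) ha' fun b b' hb => ?_,
    ⟨a, mem_insert_self _ _⟩, le_insertA ..⟩
  rw [ha b (mem_image_of_mem Prod.fst hb)]
  exact ⟨fun ⟨c', hc, hac⟩ => p.biUnique_mapB.2 hc hb ▸ hac, fun h => ⟨b', hb, h⟩⟩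

theorem isCofinal_forthB (hE' : ∀ k, BipExtension E' k) (b : B) :
    IsCofinal {q : BipPartialIso E E' | ∃ b', (b, b') ∈ q.mapB} := fun p =>
  let ⟨q, hq, hpq⟩ := isCofinal_forthA (fun k => (hE' k).flip) b p.flip
  ⟨q.flip, hq, flip_le_flip_iff.1 hpq⟩

theorem isCofinal_backB (hE : ∀ k, BipExtension E k) (b' : B') :
    IsCofinal {q : BipPartialIso E E' | ∃ b, (b, b') ∈ q.mapB} := fun p =>
  let ⟨q, hq, hpq⟩ := isCofinal_backA (fun k => (hE k).flip) b' p.flip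
  ⟨q.flip, hq, flip_le_flip_iff.1 hpq⟩

def cofinal (hE : ∀ k, BipExtension E k) (hE' : ∀ k, BipExtension E' k) :
    A ⊕ A' ⊕ B ⊕ B' → Order.Cofinal (BipPartialIso E E')
  | .inl a => ⟨_, isCofinal_forthA hE' a⟩
  | .inr (.inl a') => ⟨_, isCofinal_backA hE a'⟩
  | .inr (.inr (.inl b)) => ⟨_, isCofinal_forthB hE' b⟩
  | .inr (.inr (.inr b')) => ⟨_, isCofinal_backB hE b'⟩

variable (I : Order.Ideal (BipPartialIso E E'))

def unionA (a : A) (a' : A') : Prop := ∃ p ∈ I, (a, a') ∈ p.mapA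

def unionB (b : B) (b' : B') : Prop := ∃ p ∈ I, (b, b') ∈ p.mapB

theorem biUnique_unionA : BiUnique (unionA I) := by
  constructor <;> rintro x y z ⟨p, hp, hx⟩ ⟨q, hq, hy⟩ <;>
    obtain ⟨r, -, hpr, hqr⟩ := I.directed p hp q hq
  · exact r.biUnique_mapA.1 (hpr.1 hx) (hqr.1 hy)
  · exact r.biUnique_mapA.2 (hpr.1 hx) (hqr.1 hy)

theorem biUnique_unionB : BiUnique (unionB I) := by
  constructor <;> rintro x y z ⟨p, hp, hx⟩ ⟨q, hq, hy⟩ <;>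
    obtain ⟨r, -, hpr, hqr⟩ := I.directed p hp q hq
  · exact r.biUnique_mapB.1 (hpr.2 hx) (hqr.2 hy)
  · exact r.biUnique_mapB.2 (hpr.2 hx) (hqr.2 hy)

theorem rel_iff_of_unionA_of_unionB {a : A} {a' : A'} {b : B} {b' : B'} (ha : unionA I a a')
    (hb : unionB I b b') : E a b ↔ E' a' b' := by
  obtain ⟨p, hp, ha⟩ := ha
  obtain ⟨q, hq, hb⟩ := hb
  obtain ⟨r, -, hpr, hqr⟩ := I.directed p hp q hq
  exact r.rel_iff (hpr.1 ha) (hqr.2 hb)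

variable {I} {hE : ∀ k, BipExtension E k} {hE' : ∀ k, BipExtension E' k}

theorem biTotal_unionA (hI : ∀ i, ∃ p ∈ cofinal hE hE' i, p ∈ I) : BiTotal (unionA I) :=
  ⟨fun a => let ⟨p, ⟨a', h⟩, hp⟩ := hI (.inl a); ⟨a', p, hp, h⟩,
    fun a' => let ⟨p, ⟨a, h⟩, hp⟩ := hI (.inr (.inl a')); ⟨a, p, hp, h⟩⟩

theorem biTotal_unionB (hI : ∀ i, ∃ p ∈ cofinal hE hE' i, p ∈ I) : BiTotal (unionB I) :=
  ⟨fun b => let ⟨p, ⟨b', h⟩, hp⟩ := hI (.inr (.inr (.inl b))); ⟨b', p, hp, h⟩,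
    fun b' => let ⟨p, ⟨b, h⟩, hp⟩ := hI (.inr (.inr (.inr b'))); ⟨b, p, hp, h⟩⟩

end BipPartialIso

/-- Any two countable bipartite graphs having the bipartite `k`-extension
property for every `k` are isomorphic as bipartite graphs. -/
theorem bipartite_rado_unique
    (A B A' B' : Type) [Countable A] [Countable B] [Countable A'] [Countable B']
    (E : A → B → Prop) (E' : A' → B' → Prop)
    (hE : ∀ k : ℕ, BipExtension E k) (hE' : ∀ k : ℕ, BipExtension E' k) :
    ∃ (f : A ≃ A') (g : B ≃ B'), ∀ (a : A) (b : B), E a b ↔ E' (f a) (g b) := by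
  obtain ⟨_⟩ := nonempty_encodable (A ⊕ A' ⊕ B ⊕ B')
  have hI := Order.cofinal_meets_idealOfCofinals default (BipPartialIso.cofinal hE hE')
  obtain ⟨f, hf⟩ := (BipPartialIso.biTotal_unionA hI).exists_equiv
    (BipPartialIso.biUnique_unionA _)
  obtain ⟨g, hg⟩ := (BipPartialIso.biTotal_unionB hI).exists_equiv
    (BipPartialIso.biUnique_unionB _)
  exact ⟨f, g, fun a b => BipPartialIso.rel_iff_of_unionA_of_unionB _ (hf a) (hg b)⟩
end

section
/- Fix k ∈ ℕ and p ∈ (0,1). For n ∈ ℕ, let G_n(p) be the random bipartite graph with parts A of size n² and B of size n, in which each pair (a,b) ∈ A×B is an edge independently with probability p (formally: the sample space is the set of functions ω : A×B → {0,1} with the product Bernoulli(p) measure, and (a,b) is an edge iff ω(a,b)=1). Then the probability that G_n(p) does not have the bipartite k-extension property decays exponentially in n: there exist constants C > 0 and c > 0 such that for all n, this probability is at most C·e^{−c·n}. -/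
open MeasureTheory

section Aux

open Set Filter

/-- Uncurrying (composed with a reindexing bijection) is measure preserving for finite
product measures. -/
lemma mp_general {ι σ τ α : Type} [Fintype ι] [Fintype σ] [Fintype τ]
    [MeasurableSpace α] (μ0 : Measure α) [IsProbabilityMeasure μ0] (e : ι ≃ σ × τ) :
    MeasurePreserving (fun (g : σ → τ → α) (q : ι) => g (e q).1 (e q).2)
      (Measure.pi fun _ : σ => Measure.pi fun _ : τ => μ0)
      (Measure.pi fun _ : ι => μ0) := by
  have hmeas : Measurable (fun (g : σ → τ → α) (q : ι) => g (e q).1 (e q).2) :=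
    measurable_pi_lambda _ fun q =>
      (measurable_pi_apply (e q).2).comp (measurable_pi_apply (e q).1)
  refine ⟨hmeas, ?_⟩
  refine (Measure.pi_eq fun s hs => ?_).symm
  rw [Measure.map_apply hmeas (MeasurableSet.univ_pi hs)]
  have hpre : (fun (g : σ → τ → α) (q : ι) => g (e q).1 (e q).2) ⁻¹' (univ.pi s) =
      univ.pi fun i : σ => univ.pi fun j : τ => s (e.symm (i, j)) := by
    ext g
    simp only [mem_preimage, Set.mem_pi, mem_univ, forall_true_left, true_implies]
    constructor
    · intro h i j
      have := h (e.symm (i, j))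
      simpa using this
    · intro h q
      have := h (e q).1 (e q).2
      simpa using this
  rw [hpre, Measure.pi_pi]
  simp_rw [Measure.pi_pi]
  rw [← Fintype.prod_prod_type (fun q : σ × τ => μ0 (s (e.symm q)))]
  exact (Equiv.prod_comp e.symm fun q => μ0 (s q)).symm ▸ rfl

lemma core_bound {σ τ : Type} [Fintype σ] [Fintype τ] [DecidableEq σ] [DecidableEq τ]
    (μ0 : Measure Bool) [IsProbabilityMeasure μ0]
    (X Y : Finset σ) (Z : Finset τ) (hXY : Disjoint X Y) :
    (Measure.pi fun _ : τ => Measure.pi fun _ : σ => μ0)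
      {g : τ → σ → Bool | ∀ v, v ∉ Z →
        ¬((∀ x ∈ X, g v x = true) ∧ (∀ y ∈ Y, g v y = false))}
    ≤ (1 - μ0 {true} ^ X.card * μ0 {false} ^ Y.card) ^ (Fintype.card τ - Z.card) := by
  classical
  set ν0 : Measure (σ → Bool) := Measure.pi fun _ : σ => μ0 with hν0
  set Good : Set (σ → Bool) :=
    univ.pi (fun a => if a ∈ X then {true} else if a ∈ Y then ({false} : Set Bool) else univ)
    with hGoodDef
  have hGoodMem : ∀ h : σ → Bool,
      h ∈ Good ↔ ((∀ x ∈ X, h x = true) ∧ (∀ y ∈ Y, h y = false)) := by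
    intro h
    simp only [hGoodDef, Set.mem_pi, mem_univ, true_implies]
    constructor
    · intro H
      refine ⟨fun x hx => ?_, fun y hy => ?_⟩
      · have := H x; rw [if_pos hx] at this; simpa using this
      · have := H y
        rw [if_neg (fun hx => Finset.disjoint_left.mp hXY hx hy), if_pos hy] at this
        simpa using this
    · rintro ⟨h1, h2⟩ a
      split_ifs with hX hY
      · simp [h1 a hX]
      · simp [h2 a hY]
      · trivial
  have hGoodMeas : MeasurableSet Good := by
    apply MeasurableSet.univ_pi
    intro a
    split_ifs <;> first | exact measurableSet_singleton _ | exact MeasurableSet.univ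
  have hGoodVal : ν0 Good = μ0 {true} ^ X.card * μ0 {false} ^ Y.card := by
    rw [hGoodDef, hν0, Measure.pi_pi]
    have : ∀ a : σ, μ0 (if a ∈ X then {true} else if a ∈ Y then ({false} : Set Bool) else univ)
        = if a ∈ X then μ0 {true} else if a ∈ Y then μ0 {false} else 1 := by
      intro a; split_ifs
      · rfl
      · rfl
      · exact measure_univ
    simp_rw [this]
    rw [← Finset.prod_subset (Finset.subset_univ (X ∪ Y))
      (fun a _ ha => by
        rw [if_neg (fun hx => ha (Finset.mem_union_left _ hx)),
          if_neg (fun hy => ha (Finset.mem_union_right _ hy))]),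
      Finset.prod_union hXY]
    have h1 : (∏ a ∈ X, (if a ∈ X then μ0 {true} else if a ∈ Y then μ0 {false} else 1))
        = μ0 {true} ^ X.card := by
      rw [Finset.prod_congr rfl (fun a ha => if_pos ha), Finset.prod_const]
    have h2 : (∏ a ∈ Y, (if a ∈ X then μ0 {true} else if a ∈ Y then μ0 {false} else 1))
        = μ0 {false} ^ Y.card := by
      rw [Finset.prod_congr rfl (fun a ha => by
        rw [if_neg (fun hx => Finset.disjoint_left.mp hXY hx ha), if_pos ha]),
        Finset.prod_const]
    rw [h1, h2]
  -- the bad set is a product over Zᶜ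
  have hset : {g : τ → σ → Bool | ∀ v, v ∉ Z →
        ¬((∀ x ∈ X, g v x = true) ∧ (∀ y ∈ Y, g v y = false))}
      = univ.pi (fun v => if v ∈ (Zᶜ : Finset τ) then Goodᶜ else univ) := by
    ext g
    simp only [mem_setOf_eq, Set.mem_pi, mem_univ, true_implies]
    constructor
    · intro H v
      split_ifs with hv
      · rw [Set.mem_compl_iff, hGoodMem]
        exact H v (Finset.mem_compl.mp hv)
      · trivial
    · intro H v hv
      have := H v
      rw [if_pos (Finset.mem_compl.mpr hv), Set.mem_compl_iff, hGoodMem] at this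
      exact this
  rw [hset, Measure.pi_pi]
  have hcompl : ν0 Goodᶜ = 1 - ν0 Good := prob_compl_eq_one_sub hGoodMeas
  have : ∀ v : τ, ν0 (if v ∈ (Zᶜ : Finset τ) then Goodᶜ else univ)
      = if v ∈ (Zᶜ : Finset τ) then (1 - μ0 {true} ^ X.card * μ0 {false} ^ Y.card) else 1 := by
    intro v; split_ifs
    · rw [hcompl, hGoodVal]
    · simp
  simp_rw [this]
  rw [Finset.prod_ite_mem Finset.univ (Zᶜ : Finset τ)
      (fun _ => (1 - μ0 {true} ^ X.card * μ0 {false} ^ Y.card)),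
    Finset.univ_inter, Finset.prod_const, Finset.card_compl]

/-- Every finset of size `≤ k` is the value-set of some `Fin k → Option α`. -/
lemma exists_index {α : Type} [Fintype α] [DecidableEq α] {k : ℕ} (X : Finset α)
    (h : X.card ≤ k) :
    ∃ f : Fin k → Option α, (Finset.univ.filter fun a => ∃ i, f i = some a) = X := by
  classical
  refine ⟨fun i => if h' : (i : ℕ) < X.card then some ((X.equivFin.symm ⟨i, h'⟩ : X) : α)
    else none, ?_⟩
  ext a
  simp only [Finset.mem_filter, Finset.mem_univ, true_and]
  constructor
  · rintro ⟨i, hi⟩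
    by_cases h' : (i : ℕ) < X.card
    · rw [dif_pos h'] at hi
      exact (Option.some_inj.mp hi) ▸ (X.equivFin.symm ⟨(i : ℕ), h'⟩).2
    · rw [dif_neg h'] at hi
      exact absurd hi (by simp)
  · intro ha
    set j := X.equivFin ⟨a, ha⟩ with hj
    refine ⟨⟨(j : ℕ), lt_of_lt_of_le j.2 h⟩, ?_⟩
    rw [dif_pos (show ((⟨(j : ℕ), lt_of_lt_of_le j.2 h⟩ : Fin k) : ℕ) < X.card from j.2)]
    simp [hj]

/-- The analytic estimate: polynomial times geometric decays exponentially. -/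
lemma analysis_bound (M K : ℕ) (t : ℝ) (h0 : 0 < t) (h1 : t < 1) :
    ∃ C c : ℝ, 0 < C ∧ 0 < c ∧ ∀ n : ℕ,
      2 * ((n : ℝ) + 1) ^ M * t ^ (n - K) ≤ C * Real.exp (-c * n) := by
  set u : ℝ := Real.sqrt t with hu
  have hu0 : 0 < u := Real.sqrt_pos.mpr h0
  have hu1 : u < 1 := by
    rw [hu, show (1 : ℝ) = Real.sqrt 1 by simp]
    exact Real.sqrt_lt_sqrt h0.le h1
  have hut : u ^ 2 = t := Real.sq_sqrt h0.le
  set c : ℝ := -Real.log u with hc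
  have hc0 : 0 < c := by
    rw [hc, neg_pos]
    exact Real.log_neg hu0 hu1
  have hexp : ∀ n : ℕ, Real.exp (-c * n) = u ^ n := by
    intro n
    rw [hc, neg_neg, mul_comm, Real.exp_nat_mul, Real.exp_log hu0]
  -- the auxiliary sequence
  set F : ℕ → ℝ := fun n => (2 / t ^ K) * (((n : ℝ) + 1) ^ M * u ^ n) with hF
  have hFt : Tendsto F atTop (nhds 0) := by
    have h2 : Tendsto (fun n : ℕ => ((n : ℝ)) ^ M * u ^ n) atTop (nhds 0) := by
      have := (summable_norm_pow_mul_geometric_of_norm_lt_one (R := ℝ) M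
        (by rwa [Real.norm_eq_abs, abs_of_pos hu0])).of_norm
      exact this.tendsto_atTop_zero
    have h3 : Tendsto (fun n : ℕ => (((n + 1 : ℕ) : ℝ)) ^ M * u ^ (n + 1)) atTop (nhds 0) :=
      h2.comp (tendsto_add_atTop_nat 1)
    have h4 : Tendsto (fun n : ℕ => (2 / t ^ K) * (((((n + 1 : ℕ) : ℝ)) ^ M * u ^ (n + 1)) / u))
        atTop (nhds 0) := by
      have := (h3.div_const u).const_mul (2 / t ^ K)
      simpa using this
    refine h4.congr fun n => ?_
    simp only [hF]
    push_cast
    rw [pow_succ]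
    field_simp
  have hbdd : BddAbove (Set.range F) := hFt.bddAbove_range
  obtain ⟨C0, hC0⟩ := hbdd
  refine ⟨max C0 1, c, lt_of_lt_of_le one_pos (le_max_right _ _), hc0, fun n => ?_⟩
  rw [hexp]
  have key : t ^ (n - K) ≤ t ^ n / t ^ K := by
    rw [le_div_iff₀ (pow_pos h0 K)]
    calc t ^ (n - K) * t ^ K = t ^ (n - K + K) := (pow_add t _ _).symm
      _ ≤ t ^ n := pow_le_pow_of_le_one h0.le h1.le (le_tsub_add)
  have hFn : F n ≤ max C0 1 :=
    le_trans (hC0 (Set.mem_range_self n)) (le_max_left _ _)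
  calc 2 * ((n : ℝ) + 1) ^ M * t ^ (n - K)
      ≤ 2 * ((n : ℝ) + 1) ^ M * (t ^ n / t ^ K) := by
        apply mul_le_mul_of_nonneg_left key
        positivity
    _ = F n * u ^ n := by
        simp only [hF]
        rw [show t ^ n = u ^ n * u ^ n from by rw [← hut, ← pow_mul, two_mul, pow_add]]
        field_simp
    _ ≤ max C0 1 * u ^ n := by
        apply mul_le_mul_of_nonneg_right hFn (pow_nonneg hu0.le n)

lemma per_n (k n : ℕ) (p : ℝ) (hp : p ∈ Set.Ioo (0 : ℝ) 1)
    (hle : Real.toNNReal p ≤ 1) :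
    (Measure.pi fun _ : Fin (n ^ 2) × Fin n =>
        (PMF.bernoulli (Real.toNNReal p) hle).toMeasure)
      {ω : Fin (n ^ 2) × Fin n → Bool |
        ¬ BipExtension (fun a b => ω (a, b) = true) k}
    ≤ ((2 * (n + 1) ^ (5 * k) : ℕ) : ENNReal) *
        (ENNReal.ofReal (1 - (min p (1 - p)) ^ (k + 1))) ^ (n - k) := by
  classical
  set μ0 : Measure Bool := (PMF.bernoulli (Real.toNNReal p) hle).toMeasure with hμ0
  set A := Fin (n ^ 2)
  set B := Fin n
  set Ω := (A × B → Bool)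
  set μ : Measure Ω := Measure.pi fun _ : A × B => μ0 with hμ
  set q : ℝ := min p (1 - p) with hq
  have hq0 : 0 < q := lt_min hp.1 (by linarith [hp.2])
  have hq1 : q ≤ 1 := le_trans (min_le_left _ _) hp.2.le
  set D : ENNReal := ENNReal.ofReal (1 - q ^ (k + 1)) with hD
  have hD1 : D ≤ 1 := by
    rw [hD]
    apply ENNReal.ofReal_le_one.mpr
    nlinarith [pow_pos hq0 (k + 1)]
  -- singleton values of μ0
  have hT : μ0 {true} = ENNReal.ofReal p := by
    rw [hμ0, PMF.toMeasure_apply_singleton _ _ (measurableSet_singleton _),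
      PMF.bernoulli_apply]
    rfl
  have hFa : μ0 {false} = 1 - ENNReal.ofReal p := by
    rw [hμ0, PMF.toMeasure_apply_singleton _ _ (measurableSet_singleton _),
      PMF.bernoulli_apply]
    rw [Bool.cond_false, ENNReal.coe_sub, ENNReal.coe_one]
    rfl
  -- lower bound on the per-candidate success probability
  have hsucc : ∀ a b : ℕ, a + b ≤ k - 1 →
      ENNReal.ofReal (q ^ (k + 1)) ≤ μ0 {true} ^ a * μ0 {false} ^ b := by
    intro a b hab
    have h1 : ENNReal.ofReal q ≤ μ0 {true} := by
      rw [hT]; exact ENNReal.ofReal_le_ofReal (min_le_left _ _)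
    have h2 : ENNReal.ofReal q ≤ μ0 {false} := by
      rw [hFa, show (1 : ENNReal) - ENNReal.ofReal p = ENNReal.ofReal (1 - p) by
        rw [ENNReal.ofReal_sub _ hp.1.le, ENNReal.ofReal_one]]
      exact ENNReal.ofReal_le_ofReal (min_le_right _ _)
    calc ENNReal.ofReal (q ^ (k + 1)) ≤ ENNReal.ofReal (q ^ (a + b)) := by
          apply ENNReal.ofReal_le_ofReal
          exact pow_le_pow_of_le_one hq0.le hq1 (by omega)
      _ = ENNReal.ofReal q ^ (a + b) := ENNReal.ofReal_pow hq0.le _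
      _ = ENNReal.ofReal q ^ a * ENNReal.ofReal q ^ b := pow_add _ _ _
      _ ≤ μ0 {true} ^ a * μ0 {false} ^ b :=
          mul_le_mul' (pow_le_pow_left₀ zero_le h1 a) (pow_le_pow_left₀ zero_le h2 b)
  -- side 1 bound
  have side1 : ∀ (X Y : Finset A) (Z : Finset B), Disjoint X Y →
      X.card + Y.card + Z.card ≤ k - 1 →
      μ {ω : Ω | ∀ v, v ∉ Z →
        ¬((∀ x ∈ X, ω (x, v) = true) ∧ (∀ y ∈ Y, ω (y, v) = false))} ≤ D ^ (n - k) := by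
    intro X Y Z hXY hcard
    have mp := mp_general μ0 (Equiv.prodComm A B)
    set ψ := fun (g : B → A → Bool) (q : A × B) => g (Equiv.prodComm A B q).1
      (Equiv.prodComm A B q).2 with hψ
    set S : Set Ω := {ω : Ω | ∀ v, v ∉ Z →
      ¬((∀ x ∈ X, ω (x, v) = true) ∧ (∀ y ∈ Y, ω (y, v) = false))} with hS
    have hSmeas : NullMeasurableSet S μ := (S.toFinite.measurableSet).nullMeasurableSet
    have hpre : ψ ⁻¹' S = {g : B → A → Bool | ∀ v, v ∉ Z →
        ¬((∀ x ∈ X, g v x = true) ∧ (∀ y ∈ Y, g v y = false))} := rfl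
    have h1 : μ S = (Measure.pi fun _ : B => Measure.pi fun _ : A => μ0)
        (ψ ⁻¹' S) := (mp.measure_preimage hSmeas).symm
    rw [h1, hpre]
    refine le_trans (core_bound μ0 X Y Z hXY) (le_trans
      (pow_le_pow_left₀ zero_le ?_ _) (pow_le_pow_right_of_le_one' hD1 ?_))
    · rw [hD, show (ENNReal.ofReal (1 - q ^ (k + 1))) =
        1 - ENNReal.ofReal (q ^ (k + 1)) by
        rw [ENNReal.ofReal_sub _ (pow_nonneg hq0.le _), ENNReal.ofReal_one]]
      exact tsub_le_tsub_left (hsucc X.card Y.card (by omega)) 1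
    · have hB : Fintype.card B = n := Fintype.card_fin n
      omega
  -- side 2 bound
  have side2 : ∀ (X Y : Finset B) (Z : Finset A), Disjoint X Y →
      X.card + Y.card + Z.card ≤ k - 1 →
      μ {ω : Ω | ∀ v, v ∉ Z →
        ¬((∀ x ∈ X, ω (v, x) = true) ∧ (∀ y ∈ Y, ω (v, y) = false))} ≤ D ^ (n - k) := by
    intro X Y Z hXY hcard
    have mp := mp_general μ0 (Equiv.refl (A × B))
    set ψ := fun (g : A → B → Bool) (q : A × B) => g (Equiv.refl (A × B) q).1
      (Equiv.refl (A × B) q).2 with hψ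
    set S : Set Ω := {ω : Ω | ∀ v, v ∉ Z →
      ¬((∀ x ∈ X, ω (v, x) = true) ∧ (∀ y ∈ Y, ω (v, y) = false))} with hS
    have hSmeas : NullMeasurableSet S μ := (S.toFinite.measurableSet).nullMeasurableSet
    have hpre : ψ ⁻¹' S = {g : A → B → Bool | ∀ v, v ∉ Z →
        ¬((∀ x ∈ X, g v x = true) ∧ (∀ y ∈ Y, g v y = false))} := rfl
    have h1 : μ S = (Measure.pi fun _ : A => Measure.pi fun _ : B => μ0)
        (ψ ⁻¹' S) := (mp.measure_preimage hSmeas).symm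
    rw [h1, hpre]
    refine le_trans (core_bound μ0 X Y Z hXY) (le_trans
      (pow_le_pow_left₀ zero_le ?_ _) (pow_le_pow_right_of_le_one' hD1 ?_))
    · rw [hD, show (ENNReal.ofReal (1 - q ^ (k + 1))) =
        1 - ENNReal.ofReal (q ^ (k + 1)) by
        rw [ENNReal.ofReal_sub _ (pow_nonneg hq0.le _), ENNReal.ofReal_one]]
      exact tsub_le_tsub_left (hsucc X.card Y.card (by omega)) 1
    · have hA : Fintype.card A = n ^ 2 := Fintype.card_fin _
      have hnn : n ≤ n ^ 2 := by nlinarith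
      omega
  -- index types and events for the union bound
  set SA : (Fin k → Option A) → Finset A :=
    fun f => Finset.univ.filter fun a => ∃ i, f i = some a with hSA
  set SB : (Fin k → Option B) → Finset B :=
    fun f => Finset.univ.filter fun a => ∃ i, f i = some a with hSB
  set E1 : (Fin k → Option A) × (Fin k → Option A) × (Fin k → Option B) → Set Ω :=
    fun i => if Disjoint (SA i.1) (SA i.2.1) ∧
        (SA i.1).card + (SA i.2.1).card + (SB i.2.2).card ≤ k - 1 then
      {ω : Ω | ∀ v, v ∉ SB i.2.2 →
        ¬((∀ x ∈ SA i.1, ω (x, v) = true) ∧ (∀ y ∈ SA i.2.1, ω (y, v) = false))}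
      else ∅ with hE1
  set E2 : (Fin k → Option B) × (Fin k → Option B) × (Fin k → Option A) → Set Ω :=
    fun i => if Disjoint (SB i.1) (SB i.2.1) ∧
        (SB i.1).card + (SB i.2.1).card + (SA i.2.2).card ≤ k - 1 then
      {ω : Ω | ∀ v, v ∉ SA i.2.2 →
        ¬((∀ x ∈ SB i.1, ω (v, x) = true) ∧ (∀ y ∈ SB i.2.1, ω (v, y) = false))}
      else ∅ with hE2
  -- coverage
  have hcover : {ω : Ω | ¬ BipExtension (fun a b => ω (a, b) = true) k} ⊆
      (⋃ i, E1 i) ∪ (⋃ i, E2 i) := by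
    intro ω hω
    rw [Set.mem_setOf_eq, BipExtension, not_and_or] at hω
    rcases hω with h | h
    · left
      obtain ⟨X, Y, Z, hd, hcard, hno⟩ : ∃ (X Y : Finset A) (Y_1 : Finset B),
          Disjoint X Y ∧ X.card + Y.card + Y_1.card ≤ k - 1 ∧
          ∀ v, v ∉ Y_1 → ¬((∀ x ∈ X, ω (x, v) = true) ∧ (∀ y ∈ Y, ω (y, v) = false)) := by
        by_contra hcon
        push_neg at hcon
        apply h
        intro X Y Z hd hcard
        obtain ⟨v, hv, h1, h2⟩ := hcon X Y Z hd hcard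
        refine ⟨v, hv, h1, fun y hy => ?_⟩
        rw [h2 y hy]
        simp
      obtain ⟨f, hf⟩ := exists_index (k := k) X (by omega)
      obtain ⟨g, hg⟩ := exists_index (k := k) Y (by omega)
      obtain ⟨h', hh⟩ := exists_index (k := k) Z (by omega)
      refine Set.mem_iUnion.mpr ⟨(f, g, h'), ?_⟩
      have hcond : Disjoint (SA f) (SA g) ∧
          (SA f).card + (SA g).card + (SB h').card ≤ k - 1 := by
        rw [hSA, hSB]
        simp only []
        rw [hf, hg, hh]
        exact ⟨hd, hcard⟩
      rw [hE1]
      simp only [if_pos hcond]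
      rw [hSA, hSB]
      simp only []
      rw [hf, hg, hh]
      exact hno
    · right
      obtain ⟨X, Y, Z, hd, hcard, hno⟩ : ∃ (X Y : Finset B) (Y_1 : Finset A),
          Disjoint X Y ∧ X.card + Y.card + Y_1.card ≤ k - 1 ∧
          ∀ v, v ∉ Y_1 → ¬((∀ x ∈ X, ω (v, x) = true) ∧ (∀ y ∈ Y, ω (v, y) = false)) := by
        by_contra hcon
        push_neg at hcon
        apply h
        intro X Y Z hd hcard
        obtain ⟨v, hv, h1, h2⟩ := hcon X Y Z hd hcard
        refine ⟨v, hv, h1, fun y hy => ?_⟩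
        rw [h2 y hy]
        simp
      obtain ⟨f, hf⟩ := exists_index (k := k) X (by omega)
      obtain ⟨g, hg⟩ := exists_index (k := k) Y (by omega)
      obtain ⟨h', hh⟩ := exists_index (k := k) Z (by omega)
      refine Set.mem_iUnion.mpr ⟨(f, g, h'), ?_⟩
      have hcond : Disjoint (SB f) (SB g) ∧
          (SB f).card + (SB g).card + (SA h').card ≤ k - 1 := by
        rw [hSA, hSB]
        simp only []
        rw [hf, hg, hh]
        exact ⟨hd, hcard⟩
      rw [hE2]
      simp only [if_pos hcond]
      rw [hSA, hSB]
      simp only []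
      rw [hf, hg, hh]
      exact hno
  -- per-event bounds
  have hE1bound : ∀ i, μ (E1 i) ≤ D ^ (n - k) := by
    intro i
    rw [hE1]
    simp only []
    split_ifs with hcond
    · exact side1 _ _ _ hcond.1 hcond.2
    · simp
  have hE2bound : ∀ i, μ (E2 i) ≤ D ^ (n - k) := by
    intro i
    rw [hE2]
    simp only []
    split_ifs with hcond
    · exact side2 _ _ _ hcond.1 hcond.2
    · simp
  -- union bound
  have hunion : μ {ω : Ω | ¬ BipExtension (fun a b => ω (a, b) = true) k} ≤
      (Fintype.card ((Fin k → Option A) × (Fin k → Option A) × (Fin k → Option B))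
        + Fintype.card ((Fin k → Option B) × (Fin k → Option B) × (Fin k → Option A)) : ℕ)
        * D ^ (n - k) := by
    refine le_trans (measure_mono hcover) (le_trans (measure_union_le _ _) ?_)
    push_cast
    rw [add_mul]
    gcongr
    · refine le_trans (measure_iUnion_le _) ?_
      rw [tsum_fintype]
      refine le_trans (Finset.sum_le_card_nsmul Finset.univ _ _ fun i _ => hE1bound i) ?_
      simp [nsmul_eq_mul, Finset.card_univ]
    · refine le_trans (measure_iUnion_le _) ?_
      rw [tsum_fintype]
      refine le_trans (Finset.sum_le_card_nsmul Finset.univ _ _ fun i _ => hE2bound i) ?_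
      simp [nsmul_eq_mul, Finset.card_univ]
  refine le_trans hunion ?_
  refine mul_le_mul_left ?_ _
  rw [Nat.cast_le]
  · -- cardinality count
    have hA' : Fintype.card A = n ^ 2 := Fintype.card_fin _
    have hB' : Fintype.card B = n := Fintype.card_fin _
    have hcA : Fintype.card (Fin k → Option A) = (n ^ 2 + 1) ^ k := by
      simp [Fintype.card_fun, hA']
    have hcB : Fintype.card (Fin k → Option B) = (n + 1) ^ k := by
      simp [Fintype.card_fun, hB']
    rw [Fintype.card_prod, Fintype.card_prod, Fintype.card_prod, Fintype.card_prod,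
      hcA, hcB]
    have key : n ^ 2 + 1 ≤ (n + 1) ^ 2 := by nlinarith
    have h1 : (n ^ 2 + 1) ^ k ≤ (n + 1) ^ (2 * k) := by
      calc (n ^ 2 + 1) ^ k ≤ ((n + 1) ^ 2) ^ k := Nat.pow_le_pow_left key k
        _ = (n + 1) ^ (2 * k) := by rw [← pow_mul]
    have h2 : (n + 1) ^ k ≤ (n + 1) ^ (2 * k) := Nat.pow_le_pow_right (by omega) (by omega)
    have e1 : (n ^ 2 + 1) ^ k * ((n ^ 2 + 1) ^ k * (n + 1) ^ k) ≤ (n + 1) ^ (5 * k) := by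
      calc (n ^ 2 + 1) ^ k * ((n ^ 2 + 1) ^ k * (n + 1) ^ k)
          ≤ (n + 1) ^ (2 * k) * ((n + 1) ^ (2 * k) * (n + 1) ^ k) :=
            Nat.mul_le_mul h1 (Nat.mul_le_mul h1 le_rfl)
        _ = (n + 1) ^ (5 * k) := by rw [← pow_add, ← pow_add]; congr 1; ring
    have e2 : (n + 1) ^ k * ((n + 1) ^ k * (n ^ 2 + 1) ^ k) ≤ (n + 1) ^ (5 * k) := by
      calc (n + 1) ^ k * ((n + 1) ^ k * (n ^ 2 + 1) ^ k)
          ≤ (n + 1) ^ k * ((n + 1) ^ k * (n + 1) ^ (2 * k)) :=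
            Nat.mul_le_mul le_rfl (Nat.mul_le_mul le_rfl h1)
        _ = (n + 1) ^ (4 * k) := by rw [← pow_add, ← pow_add]; congr 1; ring
        _ ≤ (n + 1) ^ (5 * k) := Nat.pow_le_pow_right (by omega) (by omega)
    have := Nat.add_le_add e1 e2
    rwa [← two_mul] at this

end Aux

/-- For fixed `k` and `p ∈ (0,1)`, the probability that the random bipartite
graph `Gₙ(p)` (parts of sizes `n²` and `n`, edges drawn independently with probability `p`)
fails the bipartite `k`-extension property decays exponentially in `n`. -/
theorem random_bipartite_extension_failure_decays
    (k : ℕ) (p : ℝ) (hp : p ∈ Set.Ioo (0 : ℝ) 1) :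
    ∃ C c : ℝ, 0 < C ∧ 0 < c ∧ ∀ n : ℕ,
      ((Measure.pi fun _ : Fin (n ^ 2) × Fin n =>
          (PMF.bernoulli (Real.toNNReal p)
            (by exact Real.toNNReal_le_one.mpr hp.2.le)).toMeasure)
        {ω : Fin (n ^ 2) × Fin n → Bool |
          ¬ BipExtension (fun a b => ω (a, b) = true) k}).toReal
        ≤ C * Real.exp (-c * n) := by
  have hq0 : 0 < min p (1 - p) := lt_min hp.1 (by linarith [hp.2])
  have hqlt1 : min p (1 - p) < 1 := lt_of_le_of_lt (min_le_left _ _) hp.2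
  have hpow1 : (min p (1 - p)) ^ (k + 1) < 1 :=
    pow_lt_one₀ hq0.le hqlt1 (Nat.succ_ne_zero k)
  have hpow0 : 0 < (min p (1 - p)) ^ (k + 1) := pow_pos hq0 (k + 1)
  have ht0 : 0 < 1 - (min p (1 - p)) ^ (k + 1) := by linarith
  have ht1 : 1 - (min p (1 - p)) ^ (k + 1) < 1 := by linarith
  obtain ⟨C, c, hC, hc, hbound⟩ := analysis_bound (5 * k) k _ ht0 ht1
  refine ⟨C, c, hC, hc, fun n => ?_⟩
  have hle : Real.toNNReal p ≤ 1 := Real.toNNReal_le_one.mpr hp.2.le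
  have hmain := per_n k n p hp hle
  set D : ENNReal := ENNReal.ofReal (1 - (min p (1 - p)) ^ (k + 1)) with hD
  have hRHSne : ((2 * (n + 1) ^ (5 * k) : ℕ) : ENNReal) * D ^ (n - k) ≠ ⊤ :=
    ENNReal.mul_ne_top (ENNReal.natCast_ne_top _)
      (ENNReal.pow_ne_top ENNReal.ofReal_ne_top)
  refine le_trans (ENNReal.toReal_mono hRHSne hmain) ?_
  have heq : (((2 * (n + 1) ^ (5 * k) : ℕ) : ENNReal) * D ^ (n - k)).toReal
      = 2 * ((n : ℝ) + 1) ^ (5 * k) * (1 - (min p (1 - p)) ^ (k + 1)) ^ (n - k) := by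
    rw [ENNReal.toReal_mul, ENNReal.toReal_pow, hD, ENNReal.toReal_ofReal ht0.le,
      ENNReal.toReal_natCast]
    push_cast
    ring
  rw [heq]
  exact hbound n
end

section
/- For every n ∈ ℕ, every tuple of real numbers a_1,…,a_n, and every ε > 0, there exists δ > 0 such that for all real numbers b_1,…,b_n satisfying |Σ_{i=1}^n a_i^k − Σ_{i=1}^n b_i^k| < δ for every k ∈ {1,…,n}, there exists a permutation π of {1,…,n} with |a_i − b_{π(i)}| < ε for every i. -/
/-!
By Newton's identities the first `n` power sums of `b : Fin n → ℝ` determine its elementary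
symmetric functions, hence the polynomial `∏ (X - b i)`, hence `b` up to a permutation. Let `U` be
the open set of tuples that are `ε`-close to a permutation of `a`. On a compact ball `K` the
power-sum map `P` is continuous, so `P '' (K \ U)` is compact and misses `P a`; a `δ`-neighbourhood
of `P a` misses it too. The second power sum being close to that of `a` keeps `b` inside `K`
(when `n ≤ 1` the first power sum is `b` itself).
-/

open Finset Polynomial Filter Topology

theorem Fintype.exists_perm_apply_eq_of_map_univ_eq {ι α : Type*} [Fintype ι] {f g : ι → α}
    (h : univ.val.map f = univ.val.map g) : ∃ σ : Equiv.Perm ι, ∀ i, g (σ i) = f i := by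
  classical
  have hfiber (c : α) : Fintype.card {i // f i = c} = Fintype.card {i // g i = c} := by
    have hcount := congrArg (Multiset.count c) h
    simp only [Multiset.count_map, eq_comm (a := c)] at hcount
    simp only [Fintype.card_subtype]
    exact hcount
  exact ⟨Equiv.ofFiberEquiv fun c => Fintype.equivOfCardEq (hfiber c), Equiv.ofFiberEquiv_map _⟩

theorem Multiset.eq_of_card_eq_of_esymm_eq {R : Type*} [CommRing R] [IsDomain R]
    {s t : Multiset R} (hcard : card s = card t) (h : ∀ k ≤ card s, s.esymm k = t.esymm k) :
    s = t := by
  have hprod : (s.map (X - C ·)).prod = (t.map (X - C ·)).prod := by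
    ext m
    rcases le_or_gt m (card s) with hm | hm
    · rw [prod_X_sub_C_coeff s hm, prod_X_sub_C_coeff t (hcard ▸ hm), hcard,
        h _ (hcard ▸ Nat.sub_le _ _)]
    · rw [coeff_eq_zero_of_natDegree_lt (by rwa [natDegree_multiset_prod_X_sub_C_eq_card]),
        coeff_eq_zero_of_natDegree_lt (by rwa [natDegree_multiset_prod_X_sub_C_eq_card, ← hcard])]
  rw [← roots_multiset_prod_X_sub_C s, hprod, roots_multiset_prod_X_sub_C]

theorem Multiset.esymm_map_univ_eq_of_sum_pow_eq {ι R : Type*} [Fintype ι] [CommRing R]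
    [IsDomain R] [CharZero R] {f g : ι → R} {m : ℕ}
    (h : ∀ k ∈ Icc 1 m, ∑ i, f i ^ k = ∑ i, g i ^ k) {k : ℕ} (hk : k ≤ m) :
    (univ.val.map f).esymm k = (univ.val.map g).esymm k := by
  induction k using Nat.strong_induction_on with
  | _ k ih =>
  rcases Nat.eq_zero_or_pos k with rfl | hk0
  · simp [Multiset.esymm]
  have newton (φ : ι → R) : (k : R) * (univ.val.map φ).esymm k = (-1) ^ (k + 1) *
      ∑ p ∈ HasAntidiagonal.antidiagonal k with p.1 < k,
        (-1) ^ p.1 * (univ.val.map φ).esymm p.1 * ∑ i, φ i ^ p.2 := by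
    simpa only [map_mul, map_sum, map_pow, map_neg, map_one, map_natCast, MvPolynomial.psum,
      MvPolynomial.aeval_esymm_eq_multiset_esymm, MvPolynomial.aeval_X] using
      congrArg (MvPolynomial.aeval φ) (MvPolynomial.mul_esymm_eq_sum ι R k)
  refine mul_left_cancel₀ (Nat.cast_ne_zero.mpr hk0.ne') ?_
  rw [newton f, newton g]
  refine congrArg _ (sum_congr rfl fun p hp => ?_)
  obtain ⟨hsum, hlt⟩ : p.1 + p.2 = k ∧ p.1 < k := by simpa using hp
  rw [ih p.1 hlt (by omega), h p.2 (mem_Icc.mpr ⟨by omega, by omega⟩)]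

theorem exists_perm_apply_eq_of_sum_pow_eq {ι R : Type*} [Fintype ι] [CommRing R]
    [IsDomain R] [CharZero R] {f g : ι → R}
    (h : ∀ k ∈ Icc 1 (Fintype.card ι), ∑ i, f i ^ k = ∑ i, g i ^ k) :
    ∃ σ : Equiv.Perm ι, ∀ i, g (σ i) = f i :=
  Fintype.exists_perm_apply_eq_of_map_univ_eq <| Multiset.eq_of_card_eq_of_esymm_eq (by simp)
    fun _ hk => Multiset.esymm_map_univ_eq_of_sum_pow_eq h (by simpa using hk)

theorem IsCompact.eventually_inter_preimage_subset {X Y : Type*} [TopologicalSpace X]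
    [TopologicalSpace Y] [T2Space Y] {f : X → Y} {K U : Set X} (hK : IsCompact K)
    (hf : ContinuousOn f K) (hU : IsOpen U) {y : Y} (hy : K ∩ f ⁻¹' {y} ⊆ U) :
    ∀ᶠ y' in 𝓝 y, K ∩ f ⁻¹' {y'} ⊆ U := by
  have hclosed : IsClosed (f '' (K \ U)) :=
    ((hK.diff hU).image_of_continuousOn (hf.mono Set.sdiff_subset)).isClosed
  have hy' : y ∉ f '' (K \ U) := by
    rintro ⟨x, ⟨hxK, hxU⟩, rfl⟩
    exact hxU (hy ⟨hxK, rfl⟩)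
  filter_upwards [hclosed.isOpen_compl.mem_nhds hy'] with y' hy' x ⟨hxK, hfx⟩
  by_contra hxU
  exact hy' ⟨x, ⟨hxK, hxU⟩, hfx⟩

theorem pi_norm_le_sqrt_sum_sq {ι : Type*} [Fintype ι] (b : ι → ℝ) : ‖b‖ ≤ √(∑ i, b i ^ 2) :=
  (pi_norm_le_iff_of_nonneg (Real.sqrt_nonneg _)).mpr fun i =>
    Real.abs_le_sqrt (single_le_sum (fun j _ => sq_nonneg (b j)) (mem_univ i))

/-- Multiset of reals depends continuously on its first `n` power sums. -/
theorem powerSums_continuously_determine_tuple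
    (n : ℕ) (a : Fin n → ℝ) (ε : ℝ) (hε : 0 < ε) :
    ∃ δ > (0 : ℝ), ∀ b : Fin n → ℝ,
      (∀ k ∈ Finset.Icc 1 n, |(∑ i, a i ^ k) - ∑ i, b i ^ k| < δ) →
      ∃ π : Equiv.Perm (Fin n), ∀ i, |a i - b (π i)| < ε := by
  rcases le_or_gt n 1 with hn | hn
  · refine ⟨ε, hε, fun b hb => ⟨1, fun i => ?_⟩⟩
    have : Subsingleton (Fin n) := Fin.subsingleton_iff_le_one.mpr hn
    simpa [Fintype.sum_subsingleton _ i] using hb 1 (mem_Icc.mpr ⟨le_rfl, i.pos⟩)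
  let P : (Fin n → ℝ) → (Fin n → ℝ) := fun b k => ∑ i, b i ^ (k.val + 1)
  let U : Set (Fin n → ℝ) := {b | ∃ π : Equiv.Perm (Fin n), ∀ i, |a i - b (π i)| < ε}
  have hU : IsOpen U := by
    simp only [U, Set.ofPred_exists, Set.ofPred_forall]
    exact isOpen_iUnion fun π => isOpen_iInter_of_finite fun i => isOpen_lt (by fun_prop) (by fun_prop)
  have hK := isCompact_closedBall (0 : Fin n → ℝ) √(∑ i, a i ^ 2 + 1)
  have hfiber : Metric.closedBall 0 √(∑ i, a i ^ 2 + 1) ∩ P ⁻¹' {P a} ⊆ U := by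
    rintro b ⟨-, hPb⟩
    obtain ⟨π, hπ⟩ := exists_perm_apply_eq_of_sum_pow_eq (f := a) (g := b) fun k hk => by
      obtain ⟨hk1, hkn⟩ := mem_Icc.mp (Fintype.card_fin n ▸ hk)
      simpa [P, Nat.sub_add_cancel hk1] using (congrFun hPb ⟨k - 1, by omega⟩).symm
    exact ⟨π, fun i => by simpa [hπ i] using hε⟩
  obtain ⟨δ, hδ, hnear⟩ := Metric.eventually_nhds_iff.mp
    (hK.eventually_inter_preimage_subset (by fun_prop) hU hfiber)
  refine ⟨min δ 1, lt_min hδ one_pos, fun b hb => hnear ?_ ⟨?_, rfl⟩⟩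
  · refine (dist_pi_lt_iff hδ).mpr fun k => ?_
    rw [Real.dist_eq, abs_sub_comm]
    exact (hb (k.val + 1) (mem_Icc.mpr ⟨Nat.le_add_left 1 _, k.isLt⟩)).trans_le (min_le_left _ _)
  · have hsq := abs_lt.mp ((hb 2 (mem_Icc.mpr ⟨one_le_two, hn⟩)).trans_le (min_le_right _ _))
    rw [mem_closedBall_zero_iff]
    exact (pi_norm_le_sqrt_sum_sq b).trans (Real.sqrt_le_sqrt (by linarith))
end
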